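/- For a Coxeter system (W,S) with Weyl group W of a root system, a subset Θ of simple roots with parabolic subgroup W_Θ, and the free Z[q,q⁻¹]-module H_Θ with basis {δ_C : C ∈ W_Θ\W}, define for each simple root α the endomorphism T_α by T_α(δ_C) = 0 if Cs_α = C, T_α(δ_C) = qδ_C + δ_{Cs_α} if Cs_α > C, and T_α(δ_C) = q⁻¹δ_C + δ_{Cs_α} if Cs_α < C (order given by Bruhat order on longest coset representatives). Then the operators S_α := T_α − q satisfy the quadratic relation of the Hecke algebra: (S_α + q)(S_α − q⁻¹) = 0. -/

import Mathlib

open CoxeterSystem LaurentPolynomial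
open scoped Classical

noncomputable section

variable {B W : Type} [Group W]

/-- The (strict) Bruhat order on a Coxeter group: `x < y` iff `y` can be obtained from `x`
by successively multiplying on the right by reflections, each time increasing the length. -/
def BruhatLT {M : CoxeterMatrix B} (cs : CoxeterSystem M W) : W → W → Prop :=
  Relation.TransGen
    (fun a b => (∃ t : W, cs.IsReflection t ∧ b = a * t) ∧ cs.length a < cs.length b)

/-- The Bruhat order (non-strict). -/
def BruhatLE {M : CoxeterMatrix B} (cs : CoxeterSystem M W) (x y : W) : Prop :=
  BruhatLT cs x y ∨ x = y

/-- The type of right cosets `H\W`. -/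
abbrev RightCoset (H : Subgroup W) : Type _ := Quotient (QuotientGroup.rightRel H)

/-- The right coset `H * x`. -/
def rcMk (H : Subgroup W) (x : W) : RightCoset H := Quotient.mk _ x

/-- Right multiplication of a right coset by a group element. -/
def rcMul (H : Subgroup W) (C : RightCoset H) (g : W) : RightCoset H :=
  Quotient.map (fun x => x * g)
    (by
      intro a b hab
      have h' := (QuotientGroup.rightRel_apply).mp hab
      exact (QuotientGroup.rightRel_apply).mpr (by
        simpa [mul_assoc, mul_inv_rev] using h')) C

/-- The standard parabolic subgroup `W_Θ` generated by the simple reflections from `Θ`. -/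
def WP {M : CoxeterMatrix B} (cs : CoxeterSystem M W) (Θ : Set B) : Subgroup W :=
  Subgroup.closure (cs.simple '' Θ)

/-- Right multiplication of a coset in `W_Θ\W` by the simple reflection `s_α`. -/
def sAct {M : CoxeterMatrix B} (cs : CoxeterSystem M W) (Θ : Set B) :
    RightCoset (WP cs Θ) → B → RightCoset (WP cs Θ) :=
  fun C α => rcMul _ C (cs.simple α)

/-- The Laurent polynomial variable `q`. -/
def qq : LaurentPolynomial ℤ := T 1

/-- The Laurent polynomial `q⁻¹`. -/
def qqinv : LaurentPolynomial ℤ := T (-1)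

/-- A Laurent polynomial lies in `q·ℤ[q]`, i.e. all coefficients in degrees `≤ 0` vanish. -/
def InQZq (p : LaurentPolynomial ℤ) : Prop := ∀ n : ℤ, n ≤ 0 → p.coeff n = 0

/-- The operator `T_α` on the free `ℤ[q,q⁻¹]`-module with basis indexed by `κ`,
relative to a right action `act` of the simple reflections on `κ` and a choice
`wc` of (longest) representative of each index:
`T_α δ_C = 0` if `Cs_α = C`; `q δ_C + δ_{Cs_α}` if `Cs_α > C`;
`q⁻¹ δ_C + δ_{Cs_α}` if `Cs_α < C` (Bruhat order on the representatives). -/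
def Tmap {M : CoxeterMatrix B} (cs : CoxeterSystem M W) {κ : Type}
    (act : κ → B → κ) (wc : κ → W) (α : B) :
    (κ →₀ LaurentPolynomial ℤ) →ₗ[LaurentPolynomial ℤ] (κ →₀ LaurentPolynomial ℤ) :=
  Finsupp.linearCombination (LaurentPolynomial ℤ) fun C =>
    if act C α = C then 0
    else if BruhatLT cs (wc C) (wc (act C α)) then
      qq • Finsupp.single C 1 + Finsupp.single (act C α) 1
    else
      qqinv • Finsupp.single C 1 + Finsupp.single (act C α) 1

/-!
Since `S_α + q = T_α`, the relation says `T_α² = (q + q⁻¹) T_α`. This is trivial on `δ_C` when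
`C s_α = C`; otherwise `T_α` preserves the span of `δ_C` and `δ_{C s_α}` and acts there by a matrix
`[[c, 1], [1, c⁻¹]]` with `c ∈ {q, q⁻¹}`, as soon as exactly one of `C < C s_α`, `C s_α < C`
holds. That follows from Deodhar's lemma `w^{C s_α} = w^C s_α`. Its proof rests on the fact that,
on a coset not fixed by `s_α`, either every element has `s_α` as a right descent or none has:
walking between two elements of the coset by simple reflections of `W_Θ`, the step where the
descent appears is an instance of the lifting property, which conjugates `s_α` into `W_Θ`. The
lifting property comes from the strong exchange condition, proved with the Tits reflection
cocycle.
-/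

namespace CoxeterSystem

variable {M : CoxeterMatrix B} (cs : CoxeterSystem M W)

local prefix:100 "s" => cs.simple
local prefix:100 "ℓ" => cs.length
local prefix:100 "π" => cs.wordProd

lemma mul_mul_eq_iff_eq_inv_mul_mul_inv {G : Type*} [Group G] {a b c t : G} :
    a * t * b = c ↔ t = a⁻¹ * c * b⁻¹ := by
  constructor <;> rintro rfl <;> group

/-- The action of `s i` on pairs `(t, ε)` whose lift to `W` is the Tits cocycle. -/
def titsPerm (i : B) : Equiv.Perm (W × ZMod 2) :=
  Function.Involutive.toPerm (fun p => (s i * p.1 * s i, p.2 + if p.1 = s i then 1 else 0)) <| by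
    rintro ⟨t, ε⟩
    have hfix : s i * t * s i = s i ↔ t = s i := by
      rw [mul_mul_eq_iff_eq_inv_mul_mul_inv]; simp
    refine Prod.ext (by simp [mul_assoc]) ?_
    simp only [hfix, add_assoc]
    split_ifs <;> simp [CharTwo.add_self_eq_zero]

lemma titsPerm_apply (i : B) (t : W) (ε : ZMod 2) :
    cs.titsPerm i (t, ε) = (s i * t * s i, ε + if t = s i then 1 else 0) := rfl

lemma titsPerm_mul_titsPerm_pow_apply (i j : B) (k : ℕ) (t : W) (ε : ZMod 2) :
    ((cs.titsPerm i * cs.titsPerm j) ^ k) (t, ε) =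
      ((s i * s j) ^ k * t * (s j * s i) ^ k,
        ε + ∑ r ∈ Finset.range (2 * k), if t = (s j * s i) ^ r * s j then 1 else 0) := by
  induction k with
  | zero => simp
  | succ k ih =>
    rw [pow_succ', Equiv.Perm.mul_apply, ih, Equiv.Perm.mul_apply, titsPerm_apply,
      titsPerm_apply]
    set p := s i * s j with hp
    set q := s j * s i with hq
    have hsp : s j * p ^ k = q ^ k * s j :=
      SemiconjBy.pow_right (x := p) (y := q) (mul_assoc _ _ _).symm k
    have hpinv : (p ^ k)⁻¹ = q ^ k := by rw [← inv_pow, mul_inv_rev, inv_simple, inv_simple]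
    have hqinv : (q ^ k)⁻¹ = p ^ k := by rw [← inv_pow, mul_inv_rev, inv_simple, inv_simple]
    have hfix_j : p ^ k * t * q ^ k = s j ↔ t = q ^ (2 * k) * s j := by
      rw [mul_mul_eq_iff_eq_inv_mul_mul_inv, hpinv, hqinv, mul_assoc, hsp, ← mul_assoc,
        ← pow_add, two_mul]
    have hfix_i : s j * (p ^ k * t * q ^ k) * s j = s i ↔ t = q ^ (2 * k + 1) * s j := by
      have hconj : (s j * p ^ k)⁻¹ * s i * (q ^ k * s j)⁻¹ = q ^ (2 * k + 1) * s j := by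
        rw [mul_inv_rev, mul_inv_rev, inv_simple, hpinv, hqinv]
        calc q ^ k * s j * s i * (s j * p ^ k) = q ^ k * q * (s j * p ^ k) := by
              simp only [hq, mul_assoc]
          _ = q ^ (2 * k + 1) * s j := by
              rw [hsp, ← mul_assoc, ← pow_succ, ← pow_add]; ring_nf
      rw [show s j * (p ^ k * t * q ^ k) * s j = (s j * p ^ k) * t * (q ^ k * s j) by
        simp only [mul_assoc], mul_mul_eq_iff_eq_inv_mul_mul_inv, hconj]
    refine Prod.ext ?_ ?_
    · rw [pow_succ' p, pow_succ q]
      simp only [hp, hq, mul_assoc]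
    · simp only [hfix_i, hfix_j]
      rw [show 2 * (k + 1) = 2 * k + 1 + 1 by ring, Finset.sum_range_succ, Finset.sum_range_succ]
      ring

lemma isLiftable_titsPerm : M.IsLiftable cs.titsPerm := by
  intro i j
  ext ⟨t, ε⟩ : 1
  rw [titsPerm_mul_titsPerm_pow_apply, cs.simple_mul_simple_pow, cs.simple_mul_simple_pow']
  set f : ℕ → ZMod 2 := fun r => if t = (s j * s i) ^ r * s j then 1 else 0
  have hperiodic : ∀ r, f (M i j + r) = f r := fun r => by
    simp only [f, pow_add, cs.simple_mul_simple_pow', one_mul]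
  have hsum : ∑ r ∈ Finset.range (2 * M i j), f r = 0 := by
    rw [two_mul, Finset.sum_range_add, Finset.sum_congr rfl fun r _ => hperiodic r,
      CharTwo.add_self_eq_zero]
  simp [hsum]

def titsHom : W →* Equiv.Perm (W × ZMod 2) := cs.lift ⟨cs.titsPerm, cs.isLiftable_titsPerm⟩

lemma titsHom_simple (i : B) : cs.titsHom (s i) = cs.titsPerm i :=
  cs.lift_apply_simple cs.isLiftable_titsPerm i

lemma titsHom_wordProd_apply (ω : List B) (t : W) (ε : ZMod 2) :
    cs.titsHom (π ω) (t, ε) = (π ω * t * (π ω)⁻¹, ε + ((cs.rightInvSeq ω).count t : ZMod 2)) := by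
  induction ω generalizing ε with
  | nil => simp
  | cons i ω ih =>
    rw [wordProd_cons, map_mul, Equiv.Perm.mul_apply, ih, titsHom_simple, titsPerm_apply]
    have hfix : π ω * t * (π ω)⁻¹ = s i ↔ (π ω)⁻¹ * s i * π ω = t := by
      rw [mul_mul_eq_iff_eq_inv_mul_mul_inv, inv_inv, eq_comm]
    have hris : cs.rightInvSeq (i :: ω) = ((π ω)⁻¹ * s i * π ω) :: cs.rightInvSeq ω := rfl
    refine Prod.ext ?_ ?_
    · simp [mul_assoc]
    · rw [hris, List.count_cons]
      simp only [hfix, beq_iff_eq]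
      split_ifs <;> push_cast <;> ring

/-- The Tits reflection cocycle; it is `1` exactly at the right inversions `t` of `w`. -/
def reflParity (w t : W) : ZMod 2 := (cs.titsHom w (t, 0)).2

lemma reflParity_wordProd (ω : List B) (t : W) :
    cs.reflParity (π ω) t = ((cs.rightInvSeq ω).count t : ZMod 2) := by
  simp [reflParity, titsHom_wordProd_apply]

lemma titsHom_apply (w t : W) (ε : ZMod 2) :
    cs.titsHom w (t, ε) = (w * t * w⁻¹, ε + cs.reflParity w t) := by
  obtain ⟨ω, -, rfl⟩ := cs.exists_isReduced w
  rw [titsHom_wordProd_apply, reflParity_wordProd]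

lemma reflParity_mul (x y t : W) :
    cs.reflParity (x * y) t = cs.reflParity y t + cs.reflParity x (y * t * y⁻¹) := by
  rw [reflParity, map_mul, Equiv.Perm.mul_apply, titsHom_apply cs y, titsHom_apply cs x,
    zero_add]

lemma reflParity_one (t : W) : cs.reflParity 1 t = 0 := by
  simp [reflParity]

lemma reflParity_inv (w t : W) : cs.reflParity w⁻¹ t = cs.reflParity w (w⁻¹ * t * w) := by
  have h := cs.reflParity_mul w w⁻¹ t
  rw [mul_inv_cancel, reflParity_one, inv_inv, eq_comm, add_eq_zero_iff_eq_neg,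
    ZMod.neg_eq_self_mod_two] at h
  exact h

lemma reflParity_self {t : W} (ht : cs.IsReflection t) : cs.reflParity t t = 1 := by
  obtain ⟨v, i, rfl⟩ := ht
  have hii : cs.reflParity (s i) (s i) = 1 := by
    simp [reflParity, titsHom_simple, titsPerm_apply]
  have hconj : v⁻¹ * (v * s i * v⁻¹) * v = s i := by group
  have hconj' : v⁻¹ * (v * s i * v⁻¹) * v⁻¹⁻¹ = s i := by group
  have hsss : s i * s i * (s i)⁻¹ = s i := by group
  rw [reflParity_mul, reflParity_mul, reflParity_inv, hconj, hconj', hsss, hii, add_comm 1,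
    ← add_assoc, CharTwo.add_self_eq_zero, zero_add]

lemma isRightInversion_of_reflParity_eq_one {w t : W} (h : cs.reflParity w t = 1) :
    cs.IsRightInversion w t := by
  obtain ⟨ω, hω, rfl⟩ := cs.exists_isReduced w
  refine cs.isRightInversion_of_mem_rightInvSeq hω ?_
  by_contra hmem
  simp [reflParity_wordProd, List.count_eq_zero_of_not_mem hmem] at h

lemma reflParity_eq_one_of_isRightInversion {w t : W} (h : cs.IsRightInversion w t) :
    cs.reflParity w t = 1 := by
  have hw : w * t * t = w := by rw [mul_assoc, h.1.mul_self, mul_one]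
  have hwt : cs.reflParity (w * t) t ≠ 1 := fun h1 => by
    have := (cs.isRightInversion_of_reflParity_eq_one h1).2
    rw [hw] at this
    exact lt_asymm h.2 this
  have hcocycle := cs.reflParity_mul (w * t) t t
  rw [hw, h.1.inv, h.1.mul_self, one_mul, reflParity_self cs h.1] at hcocycle
  rw [hcocycle]
  generalize cs.reflParity (w * t) t = x at hwt
  revert x
  decide

theorem mem_rightInvSeq_of_isRightInversion {ω : List B} {t : W}
    (h : cs.IsRightInversion (π ω) t) : t ∈ cs.rightInvSeq ω := by
  have hparity := cs.reflParity_eq_one_of_isRightInversion h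
  by_contra hmem
  simp [reflParity_wordProd, List.count_eq_zero_of_not_mem hmem] at hparity

/-- The strong exchange condition. -/
theorem exists_wordProd_mul_eq_eraseIdx {ω : List B} {t : W} (h : cs.IsRightInversion (π ω) t) :
    ∃ j < ω.length, π ω * t = π (ω.eraseIdx j) := by
  obtain ⟨j, hj, rfl⟩ := List.mem_iff_getElem.mp (cs.mem_rightInvSeq_of_isRightInversion h)
  rw [length_rightInvSeq] at hj
  refine ⟨j, hj, ?_⟩
  rw [← List.getD_eq_getElem _ 1, wordProd_mul_getD_rightInvSeq]

lemma isRightInversion_conj_simple {y : W} {i : B} (h : cs.IsLeftDescent y i) :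
    cs.IsRightInversion y (y⁻¹ * s i * y) := by
  refine ⟨by simpa using (cs.isReflection_simple i).conj y⁻¹, ?_⟩
  rwa [show y * (y⁻¹ * s i * y) = s i * y by group]

/-- The lifting property. -/
theorem simple_mul_eq_mul_simple_of_isRightDescent {y : W} {i j : B}
    (hy : cs.IsRightDescent y j) (hiy : ¬ cs.IsRightDescent (s i * y) j) :
    s i * y = y * s j := by
  rw [isRightDescent_iff] at hy
  rw [not_isRightDescent_iff] at hiy
  have hle : ℓ (s i * y * s j) ≤ ℓ (y * s j) + 1 := by
    rw [mul_assoc]; rcases cs.length_simple_mul (y * s j) i with h | h <;> omega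
  have hiy' : ℓ (s i * y) + 1 = ℓ y := by rcases cs.length_simple_mul y i with h | h <;> omega
  obtain ⟨τ, hτ, hτy⟩ := cs.exists_isReduced (y * s j)
  have hωy : π (τ ++ [j]) = y := by
    rw [wordProd_append, wordProd_singleton, ← hτy, mul_assoc, simple_mul_simple_self, mul_one]
  obtain ⟨k, hk, hexch⟩ := cs.exists_wordProd_mul_eq_eraseIdx
    (hωy ▸ cs.isRightInversion_conj_simple (cs.isLeftDescent_iff.mpr hiy'))
  rw [hωy, show y * (y⁻¹ * s i * y) = s i * y by group] at hexch
  rw [List.length_append, List.length_singleton] at hk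
  rcases (Nat.lt_succ_iff.mp hk).lt_or_eq with hk | rfl
  · exfalso
    rw [List.eraseIdx_append_of_lt_length hk, wordProd_append, wordProd_singleton,
      ← mul_inv_eq_iff_eq_mul, inv_simple] at hexch
    have := cs.length_wordProd_le (τ.eraseIdx k)
    rw [← hexch, List.length_eraseIdx_of_lt hk, ← hτ.eq, ← hτy] at this
    omega
  · rw [List.eraseIdx_append_of_length_le le_rfl] at hexch
    simpa [← hτy] using hexch

end CoxeterSystem

section ParabolicCosets

variable {M : CoxeterMatrix B} (cs : CoxeterSystem M W)

local prefix:100 "s" => cs.simple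
local prefix:100 "ℓ" => cs.length

lemma rcMk_eq_rcMk_iff (H : Subgroup W) (x y : W) : rcMk H x = rcMk H y ↔ y * x⁻¹ ∈ H :=
  Quotient.eq.trans QuotientGroup.rightRel_apply

lemma sAct_rcMk (Θ : Set B) (x : W) (α : B) :
    sAct cs Θ (rcMk (WP cs Θ) x) α = rcMk (WP cs Θ) (x * s α) := rfl

lemma sAct_sAct (Θ : Set B) (C : RightCoset (WP cs Θ)) (α : B) :
    sAct cs Θ (sAct cs Θ C α) α = C := by
  induction C using Quotient.inductionOn with
  | h x => exact congrArg (rcMk _) (cs.simple_mul_simple_cancel_right (w := x) α)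

lemma sAct_rcMk_eq_self_iff (Θ : Set B) (x : W) (α : B) :
    sAct cs Θ (rcMk (WP cs Θ) x) α = rcMk (WP cs Θ) x ↔ x * s α * x⁻¹ ∈ WP cs Θ := by
  rw [sAct_rcMk, rcMk_eq_rcMk_iff, mul_inv_rev, inv_simple, ← mul_assoc]

/-- Walking from `x` to `h * x` one simple reflection of `W_Θ` at a time, the first step at
which `s α` turns from an ascent into a descent is a lifting situation, and lifting shows that
`x * s α * x⁻¹` lies in `W_Θ`. -/
lemma mul_simple_mul_inv_mem_WP {Θ : Set B} {α : B} {h x : W} (hh : h ∈ WP cs Θ)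
    (hx : ¬ cs.IsRightDescent x α) (hhx : cs.IsRightDescent (h * x) α) :
    x * s α * x⁻¹ ∈ WP cs Θ := by
  have step : ∀ θ ∈ Θ, ∀ y ∈ WP cs Θ, (cs.IsRightDescent (y * x) α → x * s α * x⁻¹ ∈ WP cs Θ) →
      cs.IsRightDescent (s θ * y * x) α → x * s α * x⁻¹ ∈ WP cs Θ := by
    intro θ hθ y hy ih hθyx
    by_cases hyx : cs.IsRightDescent (y * x) α
    · exact ih hyx
    have hθy : s θ * y ∈ WP cs Θ := mul_mem (Subgroup.subset_closure ⟨θ, hθ, rfl⟩) hy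
    have hlift := cs.simple_mul_eq_mul_simple_of_isRightDescent (i := θ) hθyx
      (by rwa [← mul_assoc, ← mul_assoc, simple_mul_simple_self, one_mul])
    have hconj : x * s α * x⁻¹ = (s θ * y)⁻¹ * s θ * (s θ * y) := by
      rw [eq_inv_mul_of_mul_eq hlift.symm]
      group
    rw [hconj]
    exact mul_mem (mul_mem (inv_mem hθy) (Subgroup.subset_closure ⟨θ, hθ, rfl⟩)) hθy
  induction hh using Subgroup.closure_induction_left with
  | one => exact absurd (by simpa using hhx) hx
  | mul_left z hz y hy ih =>
    obtain ⟨θ, hθ, rfl⟩ := hz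
    exact step θ hθ y hy ih hhx
  | inv_mul_cancel z hz y hy ih =>
    obtain ⟨θ, hθ, rfl⟩ := hz
    rw [inv_simple] at hhx
    exact step θ hθ y hy ih hhx

lemma isRightDescent_iff_of_rcMk_eq {Θ : Set B} {α : B} {x w : W}
    (hxw : rcMk (WP cs Θ) x = rcMk (WP cs Θ) w)
    (hne : sAct cs Θ (rcMk (WP cs Θ) x) α ≠ rcMk (WP cs Θ) x) :
    cs.IsRightDescent x α ↔ cs.IsRightDescent w α := by
  have hne' := hne
  rw [hxw] at hne'
  rw [Ne, sAct_rcMk_eq_self_iff] at hne hne'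
  have hwx : w * x⁻¹ ∈ WP cs Θ := (rcMk_eq_rcMk_iff _ _ _).mp hxw
  constructor
  · intro hx
    by_contra hw
    exact hne' (mul_simple_mul_inv_mem_WP cs (inv_mem hwx) hw (by simpa [mul_assoc] using hx))
  · intro hw
    by_contra hx
    exact hne (mul_simple_mul_inv_mem_WP cs hwx hx (by simpa [mul_assoc] using hw))

/-- Deodhar's lemma for longest coset representatives. -/
theorem wc_sAct {Θ : Set B} (wc : RightCoset (WP cs Θ) → W)
    (hmem : ∀ C, rcMk (WP cs Θ) (wc C) = C)
    (hmax : ∀ C x, rcMk (WP cs Θ) x = C → ℓ x ≤ ℓ (wc C))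
    (huniq : ∀ C x, rcMk (WP cs Θ) x = C → ℓ x = ℓ (wc C) → x = wc C)
    {α : B} {C : RightCoset (WP cs Θ)} (hne : sAct cs Θ C α ≠ C) :
    wc (sAct cs Θ C α) = wc C * s α := by
  set D := sAct cs Θ C α
  have hwD : rcMk (WP cs Θ) (wc C * s α) = D := by rw [← sAct_rcMk, hmem]
  have huC : rcMk (WP cs Θ) (wc D * s α) = C := by rw [← sAct_rcMk, hmem, sAct_sAct]
  have hdescent : cs.IsRightDescent (wc C) α ↔ ¬ cs.IsRightDescent (wc D) α := by
    rw [← isRightDescent_iff_of_rcMk_eq cs (huC.trans (hmem C).symm) (by rwa [huC]),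
      isRightDescent_iff_not_isRightDescent_mul, simple_mul_simple_cancel_right]
  have hws := hmax D _ hwD
  have hus := hmax C _ huC
  refine (huniq D _ hwD ?_).symm
  by_cases hw : cs.IsRightDescent (wc C) α
  · have hu := hdescent.mp hw
    rw [isRightDescent_iff] at hw
    rw [not_isRightDescent_iff] at hu
    omega
  · have hu := not_not.mp (mt hdescent.mpr hw)
    rw [not_isRightDescent_iff] at hw
    rw [isRightDescent_iff] at hu
    omega

end ParabolicCosets

lemma BruhatLT.length_lt {M : CoxeterMatrix B} {cs : CoxeterSystem M W} {x y : W}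
    (h : BruhatLT cs x y) : cs.length x < cs.length y := by
  induction h with
  | single h => exact h.2
  | tail _ h ih => exact ih.trans h.2

lemma bruhatLT_mul_simple_iff {M : CoxeterMatrix B} (cs : CoxeterSystem M W) (w : W) (i : B) :
    BruhatLT cs w (w * cs.simple i) ↔ ¬ BruhatLT cs (w * cs.simple i) w := by
  have step {x : W} (hx : cs.length x < cs.length (x * cs.simple i)) :
      BruhatLT cs x (x * cs.simple i) :=
    .single ⟨⟨cs.simple i, cs.isReflection_simple i, rfl⟩, hx⟩
  rcases (cs.length_mul_simple_ne w i).lt_or_gt with hlt | hlt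
  · exact iff_of_false (fun h => h.length_lt.not_gt hlt)
      (not_not.mpr (by simpa using step (x := w * cs.simple i) (by simpa using hlt)))
  · exact iff_of_true (step hlt) (fun h => h.length_lt.not_gt hlt)

lemma qqinv_mul_qq : qqinv * qq = 1 := by
  rw [qqinv, qq, ← T_add, neg_add_cancel, T_zero]

section HeckeOperator

variable {M : CoxeterMatrix B} (cs : CoxeterSystem M W) {κ : Type} (act : κ → B → κ)
  (wc : κ → W) (α : B)

lemma Tmap_single (C : κ) :
    Tmap cs act wc α (Finsupp.single C 1) =
      if act C α = C then 0
      else (if BruhatLT cs (wc C) (wc (act C α)) then qq else qqinv) • Finsupp.single C 1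
        + Finsupp.single (act C α) 1 := by
  rw [Tmap, Finsupp.linearCombination_single, one_smul]
  split_ifs <;> rfl

theorem Tmap_mul_self (hact : ∀ C, act (act C α) α = C)
    (horder : ∀ C, act C α ≠ C →
      (BruhatLT cs (wc C) (wc (act C α)) ↔ ¬ BruhatLT cs (wc (act C α)) (wc C))) :
    Tmap cs act wc α * Tmap cs act wc α = (qq + qqinv) • Tmap cs act wc α := by
  ext C : 2
  simp only [LinearMap.coe_comp, Function.comp_apply, Finsupp.lsingle_apply, Module.End.mul_apply,
    LinearMap.smul_apply]
  by_cases hfix : act C α = C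
  · simp [Tmap_single, hfix]
  have hfix' : act (act C α) α ≠ act C α := by rw [hact]; exact Ne.symm hfix
  have hup := horder C hfix
  rw [Tmap_single, if_neg hfix, map_add, map_smul, Tmap_single, Tmap_single, if_neg hfix,
    if_neg hfix', hact]
  have hq := qqinv_mul_qq
  by_cases hCD : BruhatLT cs (wc C) (wc (act C α))
  · rw [if_pos hCD, if_neg (hup.mp hCD)]
    match_scalars
    · linear_combination -hq
    · ring
  · rw [if_neg hCD, if_pos (not_not.mp (mt hup.mpr hCD))]
    match_scalars
    · linear_combination -hq
    · ring

end HeckeOperator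

theorem stmt0_general {M : CoxeterMatrix B} (cs : CoxeterSystem M W) (Θ : Set B)
    (wc : RightCoset (WP cs Θ) → W)
    (hmem : ∀ C, rcMk (WP cs Θ) (wc C) = C)
    (hmax : ∀ C x, rcMk (WP cs Θ) x = C → cs.length x ≤ cs.length (wc C))
    (huniq : ∀ C x, rcMk (WP cs Θ) x = C → cs.length x = cs.length (wc C) → x = wc C)
    (α : B) :
    ((Tmap cs (sAct cs Θ) wc α - qq • 1) + qq • 1) *
      ((Tmap cs (sAct cs Θ) wc α - qq • 1) - qqinv • 1) =
    (0 : Module.End (LaurentPolynomial ℤ) (RightCoset (WP cs Θ) →₀ LaurentPolynomial ℤ)) := by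
  have hsq := Tmap_mul_self cs (sAct cs Θ) wc α (sAct_sAct cs Θ · α) fun C hne => by
    rw [wc_sAct cs wc hmem hmax huniq hne]
    exact bruhatLT_mul_simple_iff cs (wc C) α
  refine LinearMap.ext fun v => ?_
  have hv := LinearMap.congr_fun hsq v
  simp only [Module.End.mul_apply, LinearMap.smul_apply] at hv
  simp only [Module.End.mul_apply, LinearMap.sub_apply, LinearMap.add_apply, LinearMap.smul_apply,
    Module.End.one_apply, sub_add_cancel, map_sub, map_smul, hv, add_smul, LinearMap.zero_apply]
  abel

/-- The operators `S_α := T_α − q` on `H_Θ` satisfy the quadratic relation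
of the Hecke algebra: `(S_α + q)(S_α − q⁻¹) = 0`.  Here `W` is the (finite) Weyl group of a
Coxeter system, `Θ` a subset of the simple roots, `W_Θ` the corresponding parabolic
subgroup, `wc C` denotes the unique longest representative of the right coset
`C ∈ W_Θ\W`, and the order on cosets is the Bruhat order on longest representatives. -/
theorem stmt0 [Finite W] {M : CoxeterMatrix B} (cs : CoxeterSystem M W) (Θ : Set B)
    (wc : RightCoset (WP cs Θ) → W)
    (hmem : ∀ C, rcMk (WP cs Θ) (wc C) = C)
    (hmax : ∀ C x, rcMk (WP cs Θ) x = C → cs.length x ≤ cs.length (wc C))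
    (huniq : ∀ C x, rcMk (WP cs Θ) x = C → cs.length x = cs.length (wc C) → x = wc C)
    (α : B) :
    ((Tmap cs (sAct cs Θ) wc α - qq • 1) + qq • 1) *
      ((Tmap cs (sAct cs Θ) wc α - qq • 1) - qqinv • 1) =
    (0 : Module.End (LaurentPolynomial ℤ) (RightCoset (WP cs Θ) →₀ LaurentPolynomial ℤ)) :=
  stmt0_general cs Θ wc hmem hmax huniq α

end
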